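/- arXiv:0809.1995 — 6 statements merged into one kernel-verified Lean document; each statement's English description precedes it below -/
import Mathlib

section
/- Let n, m ∈ ℕ with n ≥ 2, and let A be an irreducible n × m integer matrix such that each nonzero column has either exactly two nonzero entries from {1,-1}, or exactly one nonzero entry from {2,-2}. If A contains at least one entry from {2,-2}, then the cokernel ℤ^n / A(ℤ^m) is isomorphic to ℤ/2ℤ. -/
/-- Let `A` be an irreducible `n × m` integer matrix (`n ≥ 2`) such that each
nonzero column has either exactly two nonzero entries from `{1,-1}`, or exactly one nonzero
entry from `{2,-2}`. If `A` contains at least one entry from `{2,-2}`, then the cokernel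
`ℤⁿ / A(ℤᵐ)` is isomorphic to `ℤ/2ℤ`. -/
theorem stmt1 (n m : ℕ) (hn : 2 ≤ n) (A : Matrix (Fin n) (Fin m) ℤ)
    (hirr : (SimpleGraph.fromRel (fun i j : Fin n => ∃ k, A i k ≠ 0 ∧ A j k ≠ 0)).Connected)
    (hcol : ∀ k : Fin m, (∀ i, A i k = 0) ∨
      (∃ i j : Fin n, i ≠ j ∧ (A i k = 1 ∨ A i k = -1) ∧ (A j k = 1 ∨ A j k = -1) ∧
        ∀ l, l ≠ i → l ≠ j → A l k = 0) ∨
      (∃ i : Fin n, (A i k = 2 ∨ A i k = -2) ∧ ∀ l, l ≠ i → A l k = 0))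
    (h2 : ∃ i k, A i k = 2 ∨ A i k = -2) :
    Nonempty (((Fin n → ℤ) ⧸ LinearMap.range A.mulVecLin) ≃+ ZMod 2) := by
  classical
  set G := SimpleGraph.fromRel (fun i j : Fin n => ∃ k, A i k ≠ 0 ∧ A j k ≠ 0) with hG
  set L : Submodule ℤ (Fin n → ℤ) := LinearMap.range A.mulVecLin with hL
  -- columns belong to the image
  have colmem : ∀ k : Fin m, (fun i => A i k) ∈ L := by
    intro k
    refine ⟨Pi.single k 1, ?_⟩
    funext i
    simp [Matrix.mulVecLin_apply, Matrix.mulVec, dotProduct, Pi.single_apply,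
      Finset.sum_ite_eq']
  -- structure of a column that is nonzero at two distinct places
  have colstruct : ∀ (i j : Fin n) (k : Fin m), i ≠ j → A i k ≠ 0 → A j k ≠ 0 →
      (A i k = 1 ∨ A i k = -1) ∧ (A j k = 1 ∨ A j k = -1) ∧
        ∀ l, l ≠ i → l ≠ j → A l k = 0 := by
    intro i j k hij hi hj
    rcases hcol k with h0 | ⟨i', j', hij', hi', hj', hz⟩ | ⟨i', hi', hz⟩
    · exact absurd (h0 i) hi
    · have himem : i = i' ∨ i = j' := by
        by_contra h; push_neg at h; exact hi (hz i h.1 h.2)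
      have hjmem : j = i' ∨ j = j' := by
        by_contra h; push_neg at h; exact hj (hz j h.1 h.2)
      rcases himem with rfl | rfl <;> rcases hjmem with rfl | rfl
      · exact absurd rfl hij
      · exact ⟨hi', hj', fun l h1 h2 => hz l h1 h2⟩
      · exact ⟨hj', hi', fun l h1 h2 => hz l h2 h1⟩
      · exact absurd rfl hij
    · have h1 : i = i' := by by_contra h; exact hi (hz i h)
      have h2 : j = i' := by by_contra h; exact hj (hz j h)
      exact absurd (h1.trans h2.symm) hij
  -- expression of a column concentrated on two coordinates
  have colexpr : ∀ (i j : Fin n) (k : Fin m), i ≠ j →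
      (∀ l, l ≠ i → l ≠ j → A l k = 0) →
      (fun l => A l k) = Pi.single i (A i k) + Pi.single j (A j k) := by
    intro i j k hij hz
    funext l
    rcases eq_or_ne l i with rfl | h1
    · simp [Pi.single_apply, hij, hij.symm]
    · rcases eq_or_ne l j with rfl | h2
      · simp [Pi.single_apply, hij, hij.symm, h1]
      · simp [Pi.single_apply, h1, h2, hz l h1 h2]
  -- adjacency gives a column nonzero at both endpoints
  have adjdata : ∀ i j : Fin n, G.Adj i j → ∃ k, A i k ≠ 0 ∧ A j k ≠ 0 := by
    intro i j hadj
    rw [hG, SimpleGraph.fromRel_adj] at hadj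
    rcases hadj.2 with ⟨k, h1, h2⟩ | ⟨k, h1, h2⟩
    · exact ⟨k, h1, h2⟩
    · exact ⟨k, h2, h1⟩
  -- propagation of 2•eᵢ along edges
  have twoP : ∀ i j : Fin n, G.Adj i j → Pi.single i (2:ℤ) ∈ L →
      Pi.single j (2:ℤ) ∈ L := by
    intro i j hadj hi2
    obtain ⟨k, hAi, hAj⟩ := adjdata i j hadj
    have hij := hadj.ne
    obtain ⟨hsi, hsj, hz⟩ := colstruct i j k hij hAi hAj
    have hcolk := colmem k
    rw [colexpr i j k hij hz] at hcolk
    rcases hsi with h1 | h1 <;> rcases hsj with h2 | h2 <;> rw [h1, h2] at hcolk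
    · have key : (Pi.single j (2:ℤ) : Fin n → ℤ) =
          (2:ℤ) • (Pi.single i (1:ℤ) + Pi.single j (1:ℤ)) - Pi.single i (2:ℤ) := by
        funext l
        rcases eq_or_ne l i with rfl | e1
        · simp [Pi.single_apply, hij, hij.symm]
        · rcases eq_or_ne l j with rfl | e2
          · simp [Pi.single_apply, hij, hij.symm, e1]
          · simp [Pi.single_apply, e1, e2]
      rw [key]; exact sub_mem (Submodule.smul_mem _ _ hcolk) hi2
    · have key : (Pi.single j (2:ℤ) : Fin n → ℤ) =
          Pi.single i (2:ℤ) - (2:ℤ) • (Pi.single i (1:ℤ) + Pi.single j (-1:ℤ)) := by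
        funext l
        rcases eq_or_ne l i with rfl | e1
        · simp [Pi.single_apply, hij, hij.symm]
        · rcases eq_or_ne l j with rfl | e2
          · simp [Pi.single_apply, hij, hij.symm, e1]
          · simp [Pi.single_apply, e1, e2]
      rw [key]; exact sub_mem hi2 (Submodule.smul_mem _ _ hcolk)
    · have key : (Pi.single j (2:ℤ) : Fin n → ℤ) =
          (2:ℤ) • (Pi.single i (-1:ℤ) + Pi.single j (1:ℤ)) + Pi.single i (2:ℤ) := by
        funext l
        rcases eq_or_ne l i with rfl | e1
        · simp [Pi.single_apply, hij, hij.symm]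
        · rcases eq_or_ne l j with rfl | e2
          · simp [Pi.single_apply, hij, hij.symm, e1]
          · simp [Pi.single_apply, e1, e2]
      rw [key]; exact add_mem (Submodule.smul_mem _ _ hcolk) hi2
    · have key : (Pi.single j (2:ℤ) : Fin n → ℤ) =
          (-2:ℤ) • (Pi.single i (-1:ℤ) + Pi.single j (-1:ℤ)) - Pi.single i (2:ℤ) := by
        funext l
        rcases eq_or_ne l i with rfl | e1
        · simp [Pi.single_apply, hij, hij.symm]
        · rcases eq_or_ne l j with rfl | e2
          · simp [Pi.single_apply, hij, hij.symm, e1]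
          · simp [Pi.single_apply, e1, e2]
      rw [key]; exact sub_mem (Submodule.smul_mem _ _ hcolk) hi2
  -- the seed: some 2•eᵢ₀ lies in the image
  obtain ⟨i0, k0, h2'⟩ := h2
  have hA0 : A i0 k0 ≠ 0 := by rcases h2' with h | h <;> rw [h] <;> norm_num
  have hi0 : Pi.single i0 (2:ℤ) ∈ L := by
    rcases hcol k0 with h0 | ⟨i', j', hij', hi', hj', hz⟩ | ⟨i', hi', hz⟩
    · exact absurd (h0 i0) hA0
    · have himem : i0 = i' ∨ i0 = j' := by
        by_contra h; push_neg at h; exact hA0 (hz i0 h.1 h.2)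
      rcases himem with rfl | rfl
      · rcases hi' with h | h <;> rcases h2' with h' | h' <;> omega
      · rcases hj' with h | h <;> rcases h2' with h' | h' <;> omega
    · have : i0 = i' := by by_contra h; exact hA0 (hz i0 h)
      subst this
      have hcolk := colmem k0
      have hexpr : (fun l => A l k0) = Pi.single i0 (A i0 k0) := by
        funext l
        rcases eq_or_ne l i0 with rfl | h1
        · simp [Pi.single_apply]
        · simp [Pi.single_apply, h1, hz l h1]
      rw [hexpr] at hcolk
      rcases h2' with h | h
      · rwa [h] at hcolk
      · have key : (Pi.single i0 (2:ℤ) : Fin n → ℤ) = -Pi.single i0 (-2:ℤ) := by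
          funext l
          rcases eq_or_ne l i0 with rfl | h1
          · simp [Pi.single_apply]
          · simp [Pi.single_apply, h1]
        rw [key]; rw [h] at hcolk; exact neg_mem hcolk
  -- 2•eᵢ ∈ L for all i, by connectivity
  have htwo : ∀ i, Pi.single i (2:ℤ) ∈ L := by
    have walkstep : ∀ (a b : Fin n) (_ : G.Walk a b),
        Pi.single a (2:ℤ) ∈ L → Pi.single b (2:ℤ) ∈ L := by
      intro a b w
      induction w with
      | nil => exact id
      | cons h w ih => exact fun ha => ih (twoP _ _ h ha)
    intro i
    obtain ⟨w⟩ := hirr.preconnected i0 i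
    exact walkstep _ _ w hi0
  -- eᵢ - eⱼ ∈ L for adjacent i j
  have diffadj : ∀ i j : Fin n, G.Adj i j →
      Pi.single i (1:ℤ) - Pi.single j (1:ℤ) ∈ L := by
    intro i j hadj
    obtain ⟨k, hAi, hAj⟩ := adjdata i j hadj
    have hij := hadj.ne
    obtain ⟨hsi, hsj, hz⟩ := colstruct i j k hij hAi hAj
    have hcolk := colmem k
    rw [colexpr i j k hij hz] at hcolk
    rcases hsi with h1 | h1 <;> rcases hsj with h2 | h2 <;> rw [h1, h2] at hcolk
    · have key : (Pi.single i (1:ℤ) - Pi.single j (1:ℤ) : Fin n → ℤ) =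
          (Pi.single i (1:ℤ) + Pi.single j (1:ℤ)) - Pi.single j (2:ℤ) := by
        funext l
        rcases eq_or_ne l i with rfl | e1
        · simp [Pi.single_apply, hij, hij.symm]
        · rcases eq_or_ne l j with rfl | e2
          · simp [Pi.single_apply, hij, hij.symm, e1]
          · simp [Pi.single_apply, e1, e2]
      rw [key]; exact sub_mem hcolk (htwo j)
    · have key : (Pi.single i (1:ℤ) - Pi.single j (1:ℤ) : Fin n → ℤ) =
          (Pi.single i (1:ℤ) + Pi.single j (-1:ℤ)) := by
        funext l
        rcases eq_or_ne l i with rfl | e1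
        · simp [Pi.single_apply, hij, hij.symm]
        · rcases eq_or_ne l j with rfl | e2
          · simp [Pi.single_apply, hij, hij.symm, e1]
          · simp [Pi.single_apply, e1, e2]
      rw [key]; exact hcolk
    · have key : (Pi.single i (1:ℤ) - Pi.single j (1:ℤ) : Fin n → ℤ) =
          -(Pi.single i (-1:ℤ) + Pi.single j (1:ℤ)) := by
        funext l
        rcases eq_or_ne l i with rfl | e1
        · simp [Pi.single_apply, hij, hij.symm]
        · rcases eq_or_ne l j with rfl | e2
          · simp [Pi.single_apply, hij, hij.symm, e1]
          · simp [Pi.single_apply, e1, e2]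
      rw [key]; exact neg_mem hcolk
    · have key : (Pi.single i (1:ℤ) - Pi.single j (1:ℤ) : Fin n → ℤ) =
          Pi.single i (2:ℤ) + (Pi.single i (-1:ℤ) + Pi.single j (-1:ℤ)) := by
        funext l
        rcases eq_or_ne l i with rfl | e1
        · simp [Pi.single_apply, hij, hij.symm]
        · rcases eq_or_ne l j with rfl | e2
          · simp [Pi.single_apply, hij, hij.symm, e1]
          · simp [Pi.single_apply, e1, e2]
      rw [key]; exact add_mem (htwo i) hcolk
  -- eᵢ - eⱼ ∈ L for all i j
  have diffall : ∀ i j : Fin n, Pi.single i (1:ℤ) - Pi.single j (1:ℤ) ∈ L := by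
    have walkstep : ∀ (a b : Fin n) (_ : G.Walk a b),
        Pi.single a (1:ℤ) - Pi.single b (1:ℤ) ∈ L := by
      intro a b w
      induction w with
      | nil => simp only [sub_self]; exact zero_mem L
      | @cons a c b h w ih =>
          have := add_mem (diffadj a c h) ih
          rwa [sub_add_sub_cancel] at this
    intro i j
    obtain ⟨w⟩ := hirr.preconnected i j
    exact walkstep _ _ w
  -- the sum-mod-2 linear map
  let σ : (Fin n → ℤ) →ₗ[ℤ] ℤ := ∑ i : Fin n, LinearMap.proj i
  let c : ℤ →ₗ[ℤ] ZMod 2 := (Int.castAddHom (ZMod 2)).toIntLinearMap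
  let ψ : (Fin n → ℤ) →ₗ[ℤ] ZMod 2 := c.comp σ
  have hψ : ∀ x : Fin n → ℤ, ψ x = ((∑ i, x i : ℤ) : ZMod 2) := by
    intro x
    simp [ψ, c, σ, LinearMap.sum_apply]
  have hsurj : Function.Surjective ψ := by
    intro y
    obtain ⟨z, rfl⟩ := ZMod.intCast_surjective y
    refine ⟨Pi.single i0 z, ?_⟩
    rw [hψ]
    simp
  have hker : LinearMap.ker ψ = L := by
    apply le_antisymm
    · intro x hx
      rw [LinearMap.mem_ker, hψ] at hx
      have hdvd : (2:ℤ) ∣ ∑ i, x i := by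
        have := (ZMod.intCast_zmod_eq_zero_iff_dvd (∑ i, x i) 2).mp hx
        exact_mod_cast this
      obtain ⟨cc, hc⟩ := hdvd
      have hx2 : x = (∑ i, x i • ((Pi.single i (1:ℤ) - Pi.single i0 (1:ℤ)) : Fin n → ℤ)) +
          cc • (Pi.single i0 (2:ℤ) : Fin n → ℤ) := by
        funext l
        have : (∑ i, x i • ((Pi.single i (1:ℤ) - Pi.single i0 (1:ℤ)) : Fin n → ℤ)) l =
            ∑ i, x i * ((Pi.single i (1:ℤ) : Fin n → ℤ) l - (Pi.single i0 (1:ℤ) : Fin n → ℤ) l) := by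
          simp [Finset.sum_apply]
        rw [Pi.add_apply, this]
        simp only [mul_sub, Finset.sum_sub_distrib, Pi.single_apply]
        rcases eq_or_ne l i0 with rfl | e1
        · simp only [if_pos rfl, mul_one, mul_ite, mul_zero, Finset.sum_ite_eq',
            Finset.mem_univ, if_pos, Pi.smul_apply, smul_eq_mul]
          rw [show (∑ i, x i) = 2 * cc from hc]
          simp only [Finset.sum_ite_eq, Finset.mem_univ, if_pos, Pi.single_eq_same]
          ring
        · simp [Finset.sum_ite_eq', e1]
      rw [hx2]
      exact add_mem
        (Submodule.sum_mem _ fun i _ => Submodule.smul_mem _ _ (diffall i i0))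
        (Submodule.smul_mem _ _ (htwo i0))
    · rintro x ⟨v, rfl⟩
      rw [LinearMap.mem_ker, hψ]
      have heven : ∀ k : Fin m, (2:ℤ) ∣ ∑ i, A i k := by
        intro k
        rcases hcol k with h0 | ⟨i, j, hij, hi, hj, hz⟩ | ⟨i, hi, hz⟩
        · simp [h0]
        · have hsum : ∑ l, A l k = A i k + A j k := by
            rw [Finset.sum_eq_add_of_mem i j (Finset.mem_univ i) (Finset.mem_univ j) hij]
            intro l _ h1
            exact hz l h1.1 h1.2
          rw [hsum]
          rcases hi with h | h <;> rcases hj with h' | h' <;> rw [h, h'] <;> decide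
        · have hsum : ∑ l, A l k = A i k := by
            apply Finset.sum_eq_single_of_mem i (Finset.mem_univ i)
            intro l _ h1
            exact hz l h1
          rw [hsum]
          rcases hi with h | h <;> rw [h] <;> decide
      have hform : ∑ i, (A.mulVecLin v) i = ∑ k, (∑ i, A i k) * v k := by
        simp only [Matrix.mulVecLin_apply, Matrix.mulVec, dotProduct]
        rw [Finset.sum_comm]
        congr 1
        funext k
        rw [Finset.sum_mul]
      rw [hform]
      have : (2:ℤ) ∣ ∑ k, (∑ i, A i k) * v k :=
        Finset.dvd_sum fun k _ => Dvd.dvd.mul_right (heven k) _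
      exact (ZMod.intCast_zmod_eq_zero_iff_dvd _ 2).mpr this
  exact ⟨((Submodule.quotEquivOfEq L (LinearMap.ker ψ) hker.symm).trans
    (ψ.quotKerEquivOfSurjective hsurj)).toAddEquiv⟩
end

section
/- Let n, m ∈ ℕ with n ≥ 2, and let A be an irreducible n × m integer matrix such that each nonzero column has exactly two nonzero entries from the set {1,-1}. Then the cokernel of A : ℤ^m → ℤ^n is isomorphic to either ℤ or ℤ/2ℤ. -/
/-- Let `A` be an irreducible `n × m` integer matrix (`n ≥ 2`) such that each
nonzero column has exactly two nonzero entries from the set `{1,-1}`. Then the cokernel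
`ℤⁿ / A(ℤᵐ)` is isomorphic to either `ℤ` or `ℤ/2ℤ`. -/
theorem stmt2 (n m : ℕ) (hn : 2 ≤ n) (A : Matrix (Fin n) (Fin m) ℤ)
    (hirr : (SimpleGraph.fromRel (fun i j : Fin n => ∃ k, A i k ≠ 0 ∧ A j k ≠ 0)).Connected)
    (hcol : ∀ k : Fin m, (∀ i, A i k = 0) ∨
      ∃ i j : Fin n, i ≠ j ∧ (A i k = 1 ∨ A i k = -1) ∧ (A j k = 1 ∨ A j k = -1) ∧
        ∀ l, l ≠ i → l ≠ j → A l k = 0) :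
    Nonempty (((Fin n → ℤ) ⧸ LinearMap.range A.mulVecLin) ≃+ ℤ) ∨
      Nonempty (((Fin n → ℤ) ⧸ LinearMap.range A.mulVecLin) ≃+ ZMod 2) := by
  classical
  set R := LinearMap.range A.mulVecLin with hR
  let π : (Fin n → ℤ) →ₗ[ℤ] ((Fin n → ℤ) ⧸ R) := Submodule.mkQ R
  let g : Fin n → ((Fin n → ℤ) ⧸ R) := fun i => π (Pi.single i 1)
  -- columns are in the range
  have hcolmem : ∀ k : Fin m, (fun l => A l k) ∈ R := by
    intro k
    refine ⟨Pi.single k 1, ?_⟩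
    ext l
    simp [Matrix.mulVecLin_apply, Matrix.mulVec_single]
  -- edge relation
  have hedge : ∀ i j : Fin n, i ≠ j → (∃ k, A i k ≠ 0 ∧ A j k ≠ 0) →
      g i = g j ∨ g i = - g j := by
    intro i j hij ⟨k, hik, hjk⟩
    rcases hcol k with hz | ⟨i', j', hij', hi', hj', hz⟩
    · exact absurd (hz i) hik
    have hmemi : i = i' ∨ i = j' := by
      by_contra h
      push_neg at h
      exact hik (hz i h.1 h.2)
    have hmemj : j = i' ∨ j = j' := by
      by_contra h
      push_neg at h
      exact hjk (hz j h.1 h.2)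
    -- get: values at i, j are ±1 and zero elsewhere
    have key : (A i k = 1 ∨ A i k = -1) ∧ (A j k = 1 ∨ A j k = -1) ∧
        ∀ l, l ≠ i → l ≠ j → A l k = 0 := by
      rcases hmemi with rfl | rfl <;> rcases hmemj with rfl | rfl
      · exact absurd rfl hij
      · exact ⟨hi', hj', fun l h1 h2 => hz l h1 h2⟩
      · exact ⟨hj', hi', fun l h1 h2 => hz l h2 h1⟩
      · exact absurd rfl hij
    obtain ⟨hi, hj, hzero⟩ := key
    have hcoleq : (fun l => A l k) = A i k • Pi.single i (1:ℤ) + A j k • Pi.single j 1 := by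
      funext l
      by_cases h1 : l = i
      · subst h1
        simp [Pi.single_apply, hij]
      · by_cases h2 : l = j
        · subst h2
          simp [Pi.single_apply, Ne.symm hij]
        · simp [Pi.single_apply, h1, h2, hzero l h1 h2]
    have h0 : A i k • g i + A j k • g j = 0 := by
      have := (Submodule.Quotient.mk_eq_zero R).mpr (hcolmem k)
      rw [hcoleq] at this
      rw [Submodule.Quotient.mk_add, Submodule.Quotient.mk_smul, Submodule.Quotient.mk_smul] at this
      exact this
    rcases hi with hi | hi <;> rcases hj with hj | hj <;> rw [hi, hj] at h0 <;>
        simp only [one_smul, neg_one_smul] at h0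
    · exact Or.inr (add_eq_zero_iff_eq_neg.mp h0)
    · exact Or.inl (add_neg_eq_zero.mp h0)
    · exact Or.inl (neg_add_eq_zero.mp h0)
    · exact Or.inr (neg_add_eq_zero.mp h0)
  obtain ⟨i0⟩ : Nonempty (Fin n) := ⟨⟨0, by omega⟩⟩
  have hP : ∀ i : Fin n, g i = g i0 ∨ g i = - g i0 := by
    intro i
    obtain ⟨w⟩ := hirr.preconnected i i0
    induction w with
    | nil => exact Or.inl rfl
    | cons h p ih =>
      rename_i a b _
      rw [SimpleGraph.fromRel_adj] at h
      obtain ⟨hab, hr⟩ := h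
      have hex : ∃ k, A a k ≠ 0 ∧ A b k ≠ 0 := by
        rcases hr with ⟨k, h1, h2⟩ | ⟨k, h1, h2⟩
        · exact ⟨k, h1, h2⟩
        · exact ⟨k, h2, h1⟩
      rcases hedge a b hab hex with h1 | h1 <;> rcases ih with h2 | h2 <;>
        simp [h1, h2]
  let s : Fin n → ℤ := fun i => if g i = g i0 then 1 else -1
  have hsval : ∀ i, s i = 1 ∨ s i = -1 := fun i => by
    by_cases h : g i = g i0 <;> simp [s, h]
  have hgs : ∀ i, g i = s i • g i0 := by
    intro i
    by_cases h : g i = g i0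
    · simp [s, h]
    · rcases hP i with h1 | h1
      · exact absurd h1 h
      · simp only [s, if_neg h]
        rw [h1, neg_one_smul]
  have hdecomp : ∀ v : Fin n → ℤ, π v = (∑ i, v i * s i) • g i0 := by
    intro v
    have hv : v = ∑ i, v i • (Pi.single i 1 : Fin n → ℤ) := by
      funext l
      simp [Finset.sum_apply, Pi.single_apply]
    calc π v = ∑ i, v i • g i := by
          conv_lhs => rw [hv]
          rw [map_sum]
          simp only [map_smul]
          rfl
      _ = ∑ i, (v i * s i) • g i0 := by
          refine Finset.sum_congr rfl fun i _ => ?_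
          rw [hgs i, smul_smul]
      _ = (∑ i, v i * s i) • g i0 := by rw [Finset.sum_smul]
  have hcolrel : ∀ k, (∑ i, A i k * s i) • g i0 = 0 := by
    intro k
    rw [← hdecomp]
    exact (Submodule.Quotient.mk_eq_zero R).mpr (hcolmem k)
  by_cases hall : ∀ k, ∑ i, A i k * s i = 0
  · left
    let f : (Fin n → ℤ) →ₗ[ℤ] ℤ :=
      { toFun := fun v => ∑ i, v i * s i
        map_add' := by intro x y; simp [add_mul, Finset.sum_add_distrib]
        map_smul' := by intro c x; simp [Finset.mul_sum, mul_assoc] }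
    have hker : R ≤ LinearMap.ker f := by
      rintro x ⟨v, rfl⟩
      simp only [LinearMap.mem_ker]
      show ∑ i, (A.mulVecLin v) i * s i = 0
      have hmv : ∀ i, (A.mulVecLin v) i = ∑ k, A i k * v k := by
        intro i; rfl
      calc ∑ i, (A.mulVecLin v) i * s i = ∑ i, ∑ k, A i k * v k * s i := by
            simp [hmv, Finset.sum_mul]
        _ = ∑ k, ∑ i, A i k * v k * s i := Finset.sum_comm
        _ = ∑ k, v k * ∑ i, A i k * s i := by
            refine Finset.sum_congr rfl fun k _ => ?_
            rw [Finset.mul_sum]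
            exact Finset.sum_congr rfl fun i _ => by ring
        _ = 0 := by simp [hall]
    let fbar := Submodule.liftQ R f hker
    have hfg : fbar (g i0) = s i0 := by
      show f (Pi.single i0 1) = s i0
      simp [f, Pi.single_apply]
    have hinj : ∀ c : ℤ, c • g i0 = 0 → c = 0 := by
      intro c hc
      have h1 : fbar (c • g i0) = 0 := by rw [hc, map_zero]
      rw [map_smul, hfg, smul_eq_mul] at h1
      rcases hsval i0 with h | h <;> rw [h] at h1 <;> omega
    have hinj' : Function.Injective (LinearMap.toSpanSingleton ℤ ((Fin n → ℤ) ⧸ R) (g i0)) := by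
      intro a b hab
      simp only [LinearMap.toSpanSingleton_apply] at hab
      have h0 : (a - b) • g i0 = 0 := by rw [sub_smul, hab, sub_self]
      have := hinj _ h0
      omega
    have hsurj' : Function.Surjective (LinearMap.toSpanSingleton ℤ ((Fin n → ℤ) ⧸ R) (g i0)) := by
      intro x
      obtain ⟨v, rfl⟩ := Submodule.mkQ_surjective R x
      exact ⟨∑ i, v i * s i, (hdecomp v).symm⟩
    exact ⟨((LinearEquiv.ofBijective (LinearMap.toSpanSingleton ℤ ((Fin n → ℤ) ⧸ R) (g i0))
      ⟨hinj', hsurj'⟩).symm).toAddEquiv⟩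
  · right
    push_neg at hall
    obtain ⟨k, hk⟩ := hall
    have hc2 : (∑ i, A i k * s i) = 2 ∨ (∑ i, A i k * s i) = -2 := by
      rcases hcol k with hz | ⟨i', j', hij', hi', hj', hz⟩
      · exact absurd (by simp [hz]) hk
      · have hsum : ∑ i, A i k * s i = A i' k * s i' + A j' k * s j' := by
          rw [← Finset.sum_subset (Finset.subset_univ ({i', j'} : Finset (Fin n)))]
          · rw [Finset.sum_pair hij']
          · intro l _ hl
            simp only [Finset.mem_insert, Finset.mem_singleton, not_or] at hl
            rw [hz l hl.1 hl.2, zero_mul]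
        rw [hsum] at hk ⊢
        rcases hi' with h1 | h1 <;> rcases hj' with h2 | h2 <;>
          rcases hsval i' with h3 | h3 <;> rcases hsval j' with h4 | h4 <;>
          rw [h1, h2, h3, h4] at hk ⊢ <;> omega
    have h2g : (2 : ℤ) • g i0 = 0 := by
      rcases hc2 with h | h
      · rw [← h]; exact hcolrel k
      · have hneg : ((-2 : ℤ)) • g i0 = 0 := by rw [← h]; exact hcolrel k
        calc (2:ℤ) • g i0 = -((-2:ℤ) • g i0) := by rw [neg_smul, neg_neg]
          _ = 0 := by rw [hneg, neg_zero]
    let h2 : (Fin n → ℤ) →ₗ[ℤ] ZMod 2 :=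
      { toFun := fun v => ∑ i, ((v i : ℤ) : ZMod 2)
        map_add' := by
          intro x y
          simp [Pi.add_apply, Int.cast_add, Finset.sum_add_distrib]
        map_smul' := by
          intro c x
          simp only [Pi.smul_apply, smul_eq_mul, RingHom.id_apply, zsmul_eq_mul]
          push_cast
          rw [Finset.mul_sum]
      }
    have hcast : ∀ k' : Fin m, ∑ i, ((A i k' : ℤ) : ZMod 2) = 0 := by
      intro k'
      rcases hcol k' with hz | ⟨i', j', hij', hi', hj', hz⟩
      · simp [hz]
      · rw [← Finset.sum_subset (Finset.subset_univ ({i', j'} : Finset (Fin n)))]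
        · rw [Finset.sum_pair hij']
          rcases hi' with h1 | h1 <;> rcases hj' with h2 | h2 <;> rw [h1, h2] <;>
            push_cast <;> decide
        · intro l _ hl
          simp only [Finset.mem_insert, Finset.mem_singleton, not_or] at hl
          rw [hz l hl.1 hl.2]
          simp
    have hker2 : R ≤ LinearMap.ker h2 := by
      rintro x ⟨v, rfl⟩
      simp only [LinearMap.mem_ker]
      show ∑ i, (((A.mulVecLin v) i : ℤ) : ZMod 2) = 0
      have hmv : ∀ i, (A.mulVecLin v) i = ∑ k', A i k' * v k' := by
        intro i; rfl
      calc ∑ i, (((A.mulVecLin v) i : ℤ) : ZMod 2)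
          = ∑ i, ∑ k', ((A i k' : ℤ) : ZMod 2) * ((v k' : ℤ) : ZMod 2) := by
            refine Finset.sum_congr rfl fun i _ => ?_
            rw [hmv]
            push_cast
            rfl
        _ = ∑ k', ∑ i, ((A i k' : ℤ) : ZMod 2) * ((v k' : ℤ) : ZMod 2) := Finset.sum_comm
        _ = ∑ k', (∑ i, ((A i k' : ℤ) : ZMod 2)) * ((v k' : ℤ) : ZMod 2) := by
            refine Finset.sum_congr rfl fun k' _ => ?_
            rw [Finset.sum_mul]
        _ = 0 := by simp [hcast]
    let hbar := Submodule.liftQ R h2 hker2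
    have hbg : hbar (g i0) = 1 := by
      show h2 (Pi.single i0 1) = 1
      show ∑ i, (((Pi.single i0 (1:ℤ) : Fin n → ℤ) i : ℤ) : ZMod 2) = 1
      simp [Pi.single_apply, apply_ite (fun z : ℤ => (z : ZMod 2))]
    have hinjv : ∀ x, hbar x = 0 → x = 0 := by
      intro x hx
      obtain ⟨v, rfl⟩ := Submodule.mkQ_surjective R x
      rw [show (Submodule.mkQ R) v = π v from rfl, hdecomp v] at hx ⊢
      rw [map_smul, hbg, zsmul_eq_mul, mul_one] at hx
      have hNdvd : (2 : ℤ) ∣ ∑ i, v i * s i :=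
        (ZMod.intCast_zmod_eq_zero_iff_dvd _ 2).mp hx
      obtain ⟨t, ht⟩ := hNdvd
      rw [ht, mul_comm, mul_smul, h2g, smul_zero]
    have hsurjv : Function.Surjective hbar := by
      intro x
      rcases (by decide : ∀ y : ZMod 2, y = 0 ∨ y = 1) x with h | h
      · exact ⟨0, by simp [h]⟩
      · exact ⟨g i0, by rw [hbg, h]⟩
    exact ⟨(LinearEquiv.ofBijective hbar
      ⟨(injective_iff_map_eq_zero hbar).mpr hinjv, hsurjv⟩).toAddEquiv⟩
end

section
/- For a matrix A as in the irreducible two-entry-column setting, there exists H ∈ GL_n(ℤ) such that H·A(ℤ^m) = 2ℤ ⊕ ℤ^{n-1}, i.e., the image of A can be brought by an integral change of basis to the subgroup 2ℤ ⊕ ℤ^{n-1} of ℤ^n. -/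
private lemma walk_ind' {V : Type*} {G : SimpleGraph V} {P : V → Prop}
    (h : ∀ a b, G.Adj a b → P a → P b) {u v : V} (w : G.Walk u v) (hu : P u) : P v := by
  induction w with
  | nil => exact hu
  | cons h' p ih => exact ih (h _ _ h' hu)

/-- For an irreducible `n × m` integer matrix `A` (`n ≥ 2`) each of whose nonzero
columns has exactly two nonzero entries from `{1,-1}` or exactly one nonzero entry from
`{2,-2}`, and which contains at least one entry from `{2,-2}`, there exists `H ∈ GLₙ(ℤ)`
such that `H·A(ℤᵐ) = 2ℤ ⊕ ℤ^{n-1}`, i.e. the image of `H·A` is the set of integer vectors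
whose first coordinate is even. -/
theorem stmt3 (n m : ℕ) (hn : 2 ≤ n) (A : Matrix (Fin n) (Fin m) ℤ)
    (hirr : (SimpleGraph.fromRel (fun i j : Fin n => ∃ k, A i k ≠ 0 ∧ A j k ≠ 0)).Connected)
    (hcol : ∀ k : Fin m, (∀ i, A i k = 0) ∨
      (∃ i j : Fin n, i ≠ j ∧ (A i k = 1 ∨ A i k = -1) ∧ (A j k = 1 ∨ A j k = -1) ∧
        ∀ l, l ≠ i → l ≠ j → A l k = 0) ∨
      (∃ i : Fin n, (A i k = 2 ∨ A i k = -2) ∧ ∀ l, l ≠ i → A l k = 0))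
    (h2 : ∃ i k, A i k = 2 ∨ A i k = -2) :
    ∃ H : Matrix (Fin n) (Fin n) ℤ, IsUnit H.det ∧
      ∀ v : Fin n → ℤ,
        v ∈ LinearMap.range (H * A).mulVecLin ↔ (2 : ℤ) ∣ v ⟨0, by omega⟩ := by
  classical
  haveI : NeZero n := ⟨by omega⟩
  have hz0 : (⟨0, by omega⟩ : Fin n) = 0 := rfl
  set L := LinearMap.range A.mulVecLin with hLdef
  -- each column is in the image
  have hcolmem : ∀ k, (fun l => A l k) ∈ L := by
    intro k
    refine ⟨Pi.single k 1, ?_⟩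
    simp [Matrix.mulVecLin_apply]; rfl
  -- key: for each i there is a sign s with e_i - s • e_0 ∈ L
  have key : ∀ i : Fin n, ∃ s : ℤ, (s = 1 ∨ s = -1) ∧
      (Pi.single i 1 - s • Pi.single (0 : Fin n) (1 : ℤ)) ∈ L := by
    intro i
    obtain ⟨w⟩ := hirr.preconnected 0 i
    refine walk_ind' (P := fun b : Fin n => ∃ s : ℤ, (s = 1 ∨ s = -1) ∧
        (Pi.single b 1 - s • Pi.single (0 : Fin n) (1 : ℤ)) ∈ L)
      ?_ w ⟨1, Or.inl rfl, by simpa using Submodule.zero_mem L⟩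
    rintro a b hab ⟨s, hs, hmem⟩
    rw [SimpleGraph.fromRel_adj] at hab
    obtain ⟨hne, hk⟩ := hab
    have hk' : ∃ k, A a k ≠ 0 ∧ A b k ≠ 0 := by tauto
    obtain ⟨k, ha, hb⟩ := hk'
    rcases hcol k with h0 | ⟨i', j', hij, hi', hj', hzero⟩ | ⟨i', hi', hzero⟩
    · exact absurd (h0 a) ha
    · have haa : a = i' ∨ a = j' := by
        by_contra hcon; push_neg at hcon; exact ha (hzero a hcon.1 hcon.2)
      have hbb : b = i' ∨ b = j' := by
        by_contra hcon; push_neg at hcon; exact hb (hzero b hcon.1 hcon.2)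
      have hA_a : A a k = 1 ∨ A a k = -1 := by
        rcases haa with h | h <;> rw [h] <;> assumption
      have hA_b : A b k = 1 ∨ A b k = -1 := by
        rcases hbb with h | h <;> rw [h] <;> assumption
      have hset : ∀ l : Fin n, l ≠ a → l ≠ b → A l k = 0 := by
        intro l hla hlb
        refine hzero l ?_ ?_ <;> rintro rfl
        · rcases haa with h | h
          · exact hla h.symm
          · rcases hbb with h' | h'
            · exact hlb h'.symm
            · exact hne (h.trans h'.symm)
        · rcases hbb with h | h
          · rcases haa with h' | h'
            · exact hne (h'.trans h.symm)
            · exact hla h'.symm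
          · exact hlb h.symm
      have hcoleq : (fun l => A l k)
          = (A a k) • Pi.single a (1 : ℤ) + (A b k) • Pi.single b (1 : ℤ) := by
        funext l
        by_cases hla : l = a
        · subst hla
          simp [Pi.single_eq_same, Pi.single_eq_of_ne hne]
        · by_cases hlb : l = b
          · subst hlb
            simp [Pi.single_eq_same, Pi.single_eq_of_ne (Ne.symm hne), Pi.single_eq_of_ne hla]
          · simp [hset l hla hlb, Pi.single_eq_of_ne hla, Pi.single_eq_of_ne hlb]
      refine ⟨-(A a k * A b k * s), ?_, ?_⟩
      · rcases hA_a with h1 | h1 <;> rcases hA_b with h2 | h2 <;> rcases hs with h3 | h3 <;>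
          rw [h1, h2, h3] <;> norm_num
      · have hmem2 : (A b k) • (fun l => A l k)
            - (A a k * A b k) • (Pi.single a 1 - s • Pi.single (0 : Fin n) (1 : ℤ)) ∈ L :=
          Submodule.sub_mem _ (Submodule.smul_mem _ _ (hcolmem k))
            (Submodule.smul_mem _ _ hmem)
        have heq : Pi.single b 1 - (-(A a k * A b k * s)) • Pi.single (0 : Fin n) (1 : ℤ)
            = (A b k) • (fun l => A l k)
            - (A a k * A b k) • (Pi.single a 1 - s • Pi.single (0 : Fin n) (1 : ℤ)) := by
          rw [hcoleq]
          rcases hA_b with h2 | h2 <;> rw [h2] <;> module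
        rw [heq]; exact hmem2
    · exfalso
      by_cases hai : a = i'
      · by_cases hbi : b = i'
        · exact hne (hai.trans hbi.symm)
        · exact hb (hzero b hbi)
      · exact ha (hzero a hai)
  -- 2 e_0 ∈ L
  have h2e0 : ((2 : ℤ) • Pi.single (0 : Fin n) (1 : ℤ)) ∈ L := by
    obtain ⟨i, k, hik⟩ := h2
    rcases hcol k with h0 | ⟨i', j', hij, hi', hj', hzero⟩ | ⟨i', hi', hzero⟩
    · have := h0 i; omega
    · exfalso
      by_cases h1 : i = i'
      · subst h1; omega
      · by_cases h2 : i = j'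
        · subst h2; omega
        · have := hzero i h1 h2; omega
    · have hii : i = i' := by
        by_contra h; have := hzero i h; omega
      subst hii
      obtain ⟨s, hs, hmem⟩ := key i
      have hceq : (fun l => A l k) = (A i k) • Pi.single i (1 : ℤ) := by
        funext l
        by_cases hl : l = i
        · subst hl; simp
        · simp [hzero l hl, Pi.single_eq_of_ne hl]
      have hmem2 : ∀ c1 c2 : ℤ, c1 • (fun l => A l k)
          - c2 • (Pi.single i 1 - s • Pi.single (0 : Fin n) (1 : ℤ)) ∈ L := fun c1 c2 =>
        Submodule.sub_mem _ (Submodule.smul_mem _ _ (hcolmem k))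
          (Submodule.smul_mem _ _ hmem)
      rcases hik with h4 | h4 <;> rcases hs with h5 | h5
      · have heq : (2 : ℤ) • Pi.single (0 : Fin n) (1 : ℤ)
            = (1 : ℤ) • (fun l => A l k)
              - (2 : ℤ) • (Pi.single i 1 - s • Pi.single (0 : Fin n) (1 : ℤ)) := by
          rw [hceq, h4, h5]; module
        rw [heq]; exact hmem2 1 2
      · have heq : (2 : ℤ) • Pi.single (0 : Fin n) (1 : ℤ)
            = (-1 : ℤ) • (fun l => A l k)
              - (-2 : ℤ) • (Pi.single i 1 - s • Pi.single (0 : Fin n) (1 : ℤ)) := by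
          rw [hceq, h4, h5]; module
        rw [heq]; exact hmem2 (-1) (-2)
      · have heq : (2 : ℤ) • Pi.single (0 : Fin n) (1 : ℤ)
            = (-1 : ℤ) • (fun l => A l k)
              - (2 : ℤ) • (Pi.single i 1 - s • Pi.single (0 : Fin n) (1 : ℤ)) := by
          rw [hceq, h4, h5]; module
        rw [heq]; exact hmem2 (-1) 2
      · have heq : (2 : ℤ) • Pi.single (0 : Fin n) (1 : ℤ)
            = (1 : ℤ) • (fun l => A l k)
              - (-2 : ℤ) • (Pi.single i 1 - s • Pi.single (0 : Fin n) (1 : ℤ)) := by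
          rw [hceq, h4, h5]; module
        rw [heq]; exact hmem2 1 (-2)
  choose sgn hsgn hsmem using key
  -- every vector with even coordinate sum is in L
  have even_mem : ∀ w : Fin n → ℤ, (2 : ℤ) ∣ (∑ i, w i) → w ∈ L := by
    intro w hw
    have hsum1 : (∑ i, w i • Pi.single i (1 : ℤ)) = w := by
      have : (∑ i, w i • Pi.single i (1 : ℤ)) = ∑ i, Pi.single i (w i) := by
        refine Finset.sum_congr rfl fun i _ => ?_
        rw [← Pi.single_smul, smul_eq_mul, mul_one]
      rw [this, Finset.univ_sum_single]
    have hid : (∑ i, w i • (Pi.single i (1 : ℤ) - sgn i • Pi.single (0 : Fin n) (1 : ℤ)))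
        + (∑ i, w i * sgn i) • Pi.single (0 : Fin n) (1 : ℤ) = w := by
      simp only [smul_sub, smul_smul, Finset.sum_sub_distrib]
      rw [← Finset.sum_smul, hsum1]
      abel
    have hpar : (2 : ℤ) ∣ ∑ i, w i * sgn i := by
      have h1 : ∑ i, w i * sgn i = (∑ i, w i) + ∑ i, w i * (sgn i - 1) := by
        rw [← Finset.sum_add_distrib]
        refine Finset.sum_congr rfl fun i _ => by ring
      rw [h1]
      refine dvd_add hw (Finset.dvd_sum fun i _ => ?_)
      rcases hsgn i with h | h <;> rw [h]
      · simp
      · exact ⟨-w i, by ring⟩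
    obtain ⟨d, hd⟩ := hpar
    rw [← hid, hd]
    refine Submodule.add_mem _ (Submodule.sum_mem _ fun i _ =>
      Submodule.smul_mem _ _ (hsmem i)) ?_
    have : (2 * d : ℤ) • (Pi.single (0 : Fin n) (1 : ℤ) : Fin n → ℤ)
        = d • ((2 : ℤ) • (Pi.single (0 : Fin n) (1 : ℤ) : Fin n → ℤ)) := by
      rw [smul_smul]; ring_nf
    rw [this]
    exact Submodule.smul_mem _ _ h2e0
  -- every vector in L has even coordinate sum
  have mem_even : ∀ w : Fin n → ℤ, w ∈ L → (2 : ℤ) ∣ ∑ i, w i := by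
    rintro w ⟨x, rfl⟩
    have hsw : ∑ i, A.mulVecLin x i = ∑ k, (∑ i, A i k) * x k := by
      simp only [Matrix.mulVecLin_apply, Matrix.mulVec, dotProduct]
      rw [Finset.sum_comm]
      simp [Finset.sum_mul]
    rw [hsw]
    refine Finset.dvd_sum fun k _ => Dvd.dvd.mul_right ?_ _
    rcases hcol k with h0 | ⟨i, j, hij, hi, hj, hzero⟩ | ⟨i, hi, hzero⟩
    · simp [h0]
    · have hs2 : ∑ l, A l k = A i k + A j k := by
        have hrw : ∀ l : Fin n, A l k
            = (Pi.single i (A i k) : Fin n → ℤ) l + (Pi.single j (A j k) : Fin n → ℤ) l := by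
          intro l
          by_cases hla : l = i
          · subst hla; simp [Pi.single_eq_same, Pi.single_eq_of_ne hij]
          · by_cases hlb : l = j
            · subst hlb
              simp [Pi.single_eq_same, Pi.single_eq_of_ne (Ne.symm hij), Pi.single_eq_of_ne hla]
            · simp [hzero l hla hlb, Pi.single_eq_of_ne hla, Pi.single_eq_of_ne hlb]
        calc ∑ l, A l k = ∑ l, (Pi.single i (A i k) l + Pi.single j (A j k) l) :=
              Finset.sum_congr rfl fun l _ => hrw l
          _ = A i k + A j k := by
              rw [Finset.sum_add_distrib, Finset.sum_pi_single', Finset.sum_pi_single']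
              simp
      rw [hs2]
      rcases hi with h | h <;> rcases hj with h' | h' <;> rw [h, h'] <;> norm_num
    · have hs2 : ∑ l, A l k = A i k :=
        Finset.sum_eq_single_of_mem i (Finset.mem_univ i) fun l _ hl => hzero l hl
      rw [hs2]
      rcases hi with h | h <;> rw [h] <;> norm_num
  -- the change of basis matrix
  refine ⟨Matrix.of fun i j => if i = 0 then 1 else if i = j then 1 else 0, ?_, ?_⟩
  · have hdet : (Matrix.of fun i j : Fin n => if i = 0 then (1 : ℤ)
        else if i = j then 1 else 0).det = 1 := by
      rw [Matrix.det_of_upperTriangular]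
      · simp
      · intro i j hij
        have h1 : i ≠ 0 := by
          intro h; subst h; exact absurd hij (by simp [Fin.le_def, Fin.lt_def])
        have h2 : i ≠ j := by
          intro h; subst h; exact lt_irrefl _ hij
        simp [h1, h2]
    rw [hdet]; exact isUnit_one
  · intro v
    have hHmul : ∀ w : Fin n → ℤ,
        (Matrix.of fun i j : Fin n => if i = 0 then (1 : ℤ)
          else if i = j then 1 else 0).mulVec w
        = fun i => if i = 0 then ∑ j, w j else w i := by
      intro w; funext i
      by_cases hi : i = 0
      · subst hi; simp [Matrix.mulVec, dotProduct]
      · simp [Matrix.mulVec, dotProduct, hi]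
    constructor
    · rintro ⟨x, rfl⟩
      have hx : (Matrix.of fun i j : Fin n => if i = 0 then (1 : ℤ)
          else if i = j then 1 else 0) * A = _ := rfl
      rw [Matrix.mulVecLin_apply, ← Matrix.mulVec_mulVec, hHmul, hz0]
      simp only [if_pos rfl]
      exact mem_even _ ⟨x, rfl⟩
    · intro hv
      set c : ℤ := (∑ j, v j) - v 0 with hc
      have hvsum : ∑ i, (v - c • (Pi.single (0 : Fin n) (1 : ℤ) : Fin n → ℤ)) i = v 0 := by
        simp only [Pi.sub_apply, Pi.smul_apply, smul_eq_mul, Finset.sum_sub_distrib]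
        rw [← Finset.mul_sum, Finset.sum_pi_single']
        simp [hc]
      have hwmem : (v - c • (Pi.single (0 : Fin n) (1 : ℤ) : Fin n → ℤ)) ∈ L := by
        apply even_mem
        rw [hvsum]
        rw [hz0] at hv; exact hv
      obtain ⟨x, hx⟩ := hwmem
      refine ⟨x, ?_⟩
      rw [Matrix.mulVecLin_apply, ← Matrix.mulVec_mulVec]
      rw [show A.mulVec x = v - c • (Pi.single (0 : Fin n) (1 : ℤ) : Fin n → ℤ) from hx]
      rw [hHmul]
      funext i
      by_cases hi : i = 0
      · subst hi; simp only [eq_self_iff_true, if_true]; exact hvsum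
      · simp only [if_neg hi, Pi.sub_apply, Pi.smul_apply, smul_eq_mul,
          Pi.single_eq_of_ne hi, mul_zero, sub_zero]
end

section
/- Let X be a compact metric space and σ : X → X a fixed-point-free continuous involution, where X is totally disconnected (e.g., the Cantor set). Then there exists a clopen set K ⊆ X such that K ∩ σ(K) = ∅ and K ∪ σ(K) = X. -/
open Set

/-- Recursive construction: given a list of "seed" sets, build a set `K` by adding, for
each seed `U`, the part of `U` not already covered by `K ∪ σ '' K`. -/
def buildK {X : Type*} [TopologicalSpace X] (σ : X ≃ₜ X) : List (Set X) → Set X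
  | [] => ∅
  | U :: l => buildK σ l ∪ (U \ (buildK σ l ∪ σ '' buildK σ l))

lemma buildK_clopen {X : Type*} [TopologicalSpace X] (σ : X ≃ₜ X) :
    ∀ l : List (Set X), (∀ U ∈ l, IsClopen U) → IsClopen (buildK σ l)
  | [], _ => isClopen_empty
  | U :: l, h => by
    have hK := buildK_clopen σ l (fun V hV => h V (List.mem_cons_of_mem _ hV))
    have hU := h U List.mem_cons_self
    have hσK : IsClopen (σ '' buildK σ l) :=
      ⟨σ.isClosedMap _ hK.isClosed, σ.isOpenMap _ hK.isOpen⟩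
    exact hK.union (hU.diff (hK.union hσK))

lemma mem_image_sigma {X : Type*} [TopologicalSpace X] (σ : X ≃ₜ X) (hinv : ∀ x, σ (σ x) = x)
    (A : Set X) (x : X) : x ∈ σ '' A ↔ σ x ∈ A := by
  constructor
  · rintro ⟨y, hy, rfl⟩; rwa [hinv]
  · intro h; exact ⟨σ x, h, hinv x⟩

lemma buildK_disj {X : Type*} [TopologicalSpace X] (σ : X ≃ₜ X) (hinv : ∀ x, σ (σ x) = x) :
    ∀ l : List (Set X), (∀ U ∈ l, ∀ x ∈ U, σ x ∉ U) →
      ∀ x ∈ buildK σ l, σ x ∉ buildK σ l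
  | [], _ => by intro x hx; exact absurd hx (notMem_empty x)
  | U :: l, h => by
    have IH := buildK_disj σ hinv l (fun V hV => h V (List.mem_cons_of_mem _ hV))
    have hU := h U List.mem_cons_self
    intro x hx hσx
    rcases hx with hx | hx
    · rcases hσx with hσx | hσx
      · exact IH x hx hσx
      · exact hσx.2 (Or.inr ((mem_image_sigma σ hinv _ _).2 (by rwa [hinv])))
    · rcases hσx with hσx | hσx
      · exact hx.2 (Or.inr ((mem_image_sigma σ hinv _ _).2 hσx))
      · exact hU x hx.1 hσx.1

lemma buildK_cover {X : Type*} [TopologicalSpace X] (σ : X ≃ₜ X) (hinv : ∀ x, σ (σ x) = x) :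
    ∀ l : List (Set X), ∀ U ∈ l, ∀ x ∈ U,
      x ∈ buildK σ l ∨ σ x ∈ buildK σ l
  | [], U, hU => by exact absurd hU List.not_mem_nil
  | V :: l, U, hU => by
    intro x hx
    rcases List.mem_cons.1 hU with rfl | hU'
    · by_cases hK : x ∈ buildK σ l ∪ σ '' buildK σ l
      · rcases hK with hK | hK
        · exact Or.inl (Or.inl hK)
        · rcases hK with ⟨y, hy, rfl⟩
          exact Or.inr (Or.inl (by rw [hinv]; exact hy))
      · exact Or.inl (Or.inr ⟨hx, hK⟩)
    · rcases buildK_cover σ hinv l U hU' x hx with h | h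
      · exact Or.inl (Or.inl h)
      · exact Or.inr (Or.inl h)

/-- If `X` is a compact, totally disconnected metric space and `σ : X → X` is a
fixed-point-free continuous involution (a homeomorphism with `σ∘σ = id` and no fixed points),
then there is a clopen set `K ⊆ X` with `K ∩ σ(K) = ∅` and `K ∪ σ(K) = X`. -/
theorem stmt4 {X : Type*} [MetricSpace X] [CompactSpace X] [TotallyDisconnectedSpace X]
    (σ : X ≃ₜ X) (hinv : ∀ x, σ (σ x) = x) (hfree : ∀ x, σ x ≠ x) :
    ∃ K : Set X, IsClopen K ∧ K ∩ σ '' K = ∅ ∧ K ∪ σ '' K = Set.univ := by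
  -- For each x, a clopen neighborhood W x with W x ∩ σ '' (W x) = ∅.
  have hW : ∀ x : X, ∃ W : Set X, IsClopen W ∧ x ∈ W ∧ ∀ y ∈ W, σ y ∉ W := by
    intro x
    obtain ⟨U, hU, hxU, hσxU⟩ := exists_isClopen_of_totally_separated (hfree x).symm
    have hσU : IsClopen (σ '' U) := ⟨σ.isClosedMap _ hU.isClosed, σ.isOpenMap _ hU.isOpen⟩
    refine ⟨U \ σ '' U, hU.diff hσU, ⟨hxU, fun h => hσxU ((mem_image_sigma σ hinv _ _).1 h)⟩, ?_⟩
    rintro y ⟨hyU, hyσU⟩ ⟨hσyU, -⟩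
    exact hyσU ((mem_image_sigma σ hinv _ _).2 hσyU)
  choose W hWclopen hWmem hWdisj using hW
  obtain ⟨t, ht⟩ := IsCompact.elim_finite_subcover isCompact_univ W
    (fun x => (hWclopen x).isOpen) (fun x _ => mem_iUnion.2 ⟨x, hWmem x⟩)
  set l : List (Set X) := t.toList.map W with hl
  have hmem_l : ∀ U ∈ l, ∃ i ∈ t, U = W i := by
    intro U hU
    rcases List.mem_map.1 hU with ⟨i, hi, rfl⟩
    exact ⟨i, (Finset.mem_toList).1 hi, rfl⟩
  refine ⟨buildK σ l, ?_, ?_, ?_⟩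
  · exact buildK_clopen σ l (fun U hU => by
      obtain ⟨i, -, rfl⟩ := hmem_l U hU; exact hWclopen i)
  · have hd := buildK_disj σ hinv l (fun U hU => by
      obtain ⟨i, -, rfl⟩ := hmem_l U hU; exact hWdisj i)
    ext x
    simp only [mem_inter_iff, mem_empty_iff_false, iff_false, not_and]
    intro hx hσ
    exact hd x hx ((mem_image_sigma σ hinv _ _).1 hσ)
  · ext x
    simp only [mem_union, mem_univ, iff_true]
    have hx := ht (mem_univ x)
    rcases mem_iUnion₂.1 hx with ⟨i, hi, hxi⟩
    have hUl : W i ∈ l := List.mem_map.2 ⟨i, (Finset.mem_toList).2 hi, rfl⟩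
    rcases buildK_cover σ hinv l (W i) hUl x hxi with h | h
    · exact Or.inl h
    · exact Or.inr ((mem_image_sigma σ hinv _ _).2 h)
end

section
/- Let φ and σ be homeomorphisms of a compact Hausdorff space Ω with σ² = id and σφσ = φ⁻¹, generating an action α of the infinite dihedral group D_∞ which is minimal (every D_∞-orbit is dense). If φ is not minimal, then there is a clopen φ-invariant subset F ⊆ Ω such that φ restricted to F is minimal, σ(F) ∩ F = ∅, and σ(F) ∪ F = Ω. Moreover, any other subset F' with these properties equals F or σ(F). -/
section aux
set_option linter.unusedSectionVars false
variable {Ω : Type*} [TopologicalSpace Ω] [CompactSpace Ω] [T2Space Ω]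

lemma aux_symm_image (φ : Ω ≃ₜ Ω) {F : Set Ω} (h : φ '' F = F) : φ.symm '' F = F := by
  conv_lhs => rw [← h, ← Set.image_comp]
  simp

lemma aux_image_eq (φ : Ω ≃ₜ Ω) (F : Set Ω) : φ '' F = φ.symm ⁻¹' F :=
  φ.toEquiv.image_eq_preimage_symm F

/-- existence of a minimal subsystem inside a given invariant set -/
lemma aux_min (φ : Ω ≃ₜ Ω) {F₀ : Set Ω} (h₀ : IsClosed F₀) (hinv : φ '' F₀ = F₀)
    (hne : F₀.Nonempty) :
    ∃ M : Set Ω, M ⊆ F₀ ∧ IsClosed M ∧ φ '' M = M ∧ M.Nonempty ∧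
      ∀ C : Set Ω, C ⊆ M → IsClosed C → φ '' C = C → C.Nonempty → C = M := by
  set S : Set (Set Ω) := {F | IsClosed F ∧ φ '' F = F ∧ F.Nonempty} with hS
  have H : ∀ c ⊆ S, IsChain (· ⊆ ·) c → c.Nonempty → ∃ lb ∈ S, ∀ s ∈ c, lb ⊆ s := by
    intro c hcS hchain hcne
    refine ⟨⋂₀ c, ⟨?_, ?_, ?_⟩, fun s hs => Set.sInter_subset_of_mem hs⟩
    · exact isClosed_sInter fun t ht => (hcS ht).1
    · rw [aux_image_eq, Set.preimage_sInter]
      have : ∀ t ∈ c, φ.symm ⁻¹' t = t := by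
        intro t ht
        rw [← aux_image_eq, (hcS ht).2.1]
      rw [Set.sInter_eq_biInter]
      exact Set.iInter₂_congr this
    · have : Nonempty c := hcne.to_subtype
      refine IsCompact.nonempty_sInter_of_directed_nonempty_isCompact_isClosed
        ?_ (fun U hU => (hcS hU).2.2) (fun U hU => (hcS hU).1.isCompact)
        (fun U hU => (hcS hU).1)
      intro a ha b hb
      rcases hchain.total ha hb with h | h
      · exact ⟨a, ha, le_refl _, h⟩
      · exact ⟨b, hb, h, le_refl _⟩
  obtain ⟨m, hmx, hmmin⟩ := zorn_superset_nonempty S H F₀ ⟨h₀, hinv, hne⟩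
  exact ⟨m, hmx, hmmin.1.1, hmmin.1.2.1, hmmin.1.2.2, fun C hCm hCc hCi hCne =>
    subset_antisymm hCm (hmmin.2 ⟨hCc, hCi, hCne⟩ hCm)⟩

end aux

/-- Let `φ, σ` be homeomorphisms of a compact Hausdorff space `Ω` with `σ² = id`
and `σφσ = φ⁻¹`, generating a minimal action of the infinite dihedral group (the only closed
subsets invariant under both `φ` and `σ` are `∅` and `Ω`). If `φ` is not minimal, then there is
a clopen `φ`-invariant set `F ⊆ Ω` on which `φ` restricts to a minimal system, with
`σ(F) ∩ F = ∅` and `σ(F) ∪ F = Ω`; moreover any other set `F'` with these properties equals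
`F` or `σ(F)`. -/
theorem stmt5 {Ω : Type*} [TopologicalSpace Ω] [CompactSpace Ω] [T2Space Ω]
    (φ σ : Ω ≃ₜ Ω) (hσ2 : ∀ x, σ (σ x) = x) (hrel : ∀ x, σ (φ (σ x)) = φ.symm x)
    (hmin : ∀ F : Set Ω, IsClosed F → φ '' F = F → σ '' F = F → F = ∅ ∨ F = Set.univ)
    (hnotmin : ∃ F : Set Ω, IsClosed F ∧ φ '' F = F ∧ F ≠ ∅ ∧ F ≠ Set.univ) :
    ∃ F : Set Ω,
      (IsClopen F ∧ φ '' F = F ∧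
        (∀ C : Set Ω, C ⊆ F → IsClosed C → φ '' C = C → C = ∅ ∨ C = F) ∧
        σ '' F ∩ F = ∅ ∧ σ '' F ∪ F = Set.univ) ∧
      ∀ F' : Set Ω,
        (IsClopen F' ∧ φ '' F' = F' ∧
          (∀ C : Set Ω, C ⊆ F' → IsClosed C → φ '' C = C → C = ∅ ∨ C = F') ∧
          σ '' F' ∩ F' = ∅ ∧ σ '' F' ∪ F' = Set.univ) →
        F' = F ∨ F' = σ '' F := by
  obtain ⟨F₀, hF₀c, hF₀i, hF₀ne, hF₀nu⟩ := hnotmin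
  -- basic conjugation facts
  have hσσ : ∀ A : Set Ω, σ '' (σ '' A) = A := by
    intro A
    rw [← Set.image_comp]
    simp only [Function.comp]
    conv_lhs => ext x; rw [show (fun x => σ (σ x)) = id from funext hσ2]
    simp
  have hconj : ∀ A : Set Ω, φ '' A = A → φ '' (σ '' A) = σ '' A := by
    intro A hA
    have key : ∀ x, φ (σ x) = σ (φ.symm x) := by
      intro x
      have := hrel x
      calc φ (σ x) = σ (σ (φ (σ x))) := (hσ2 _).symm
        _ = σ (φ.symm x) := by rw [this]
    have : φ '' (σ '' A) = σ '' (φ.symm '' A) := by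
      rw [← Set.image_comp, ← Set.image_comp]
      exact Set.image_congr fun x _ => key x
    rw [this, aux_symm_image φ hA]
  -- minimal subsystem
  obtain ⟨M, hMsub, hMc, hMi, hMne, hMmin⟩ := aux_min φ hF₀c hF₀i
    (Set.nonempty_iff_ne_empty.2 hF₀ne)
  have hσMc : IsClosed (σ '' M) := (σ.isClosedMap _ hMc)
  have hσMi : φ '' (σ '' M) = σ '' M := hconj M hMi
  -- M ∪ σM = univ
  have hunion : M ∪ σ '' M = Set.univ := by
    have g1 : φ '' (M ∪ σ '' M) = M ∪ σ '' M := by rw [Set.image_union, hMi, hσMi]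
    have g2 : σ '' (M ∪ σ '' M) = M ∪ σ '' M := by
      rw [Set.image_union, hσσ, Set.union_comm]
    rcases hmin (M ∪ σ '' M) (hMc.union hσMc) g1 g2 with h | h
    · obtain ⟨x, hx⟩ := hMne
      exact absurd (h ▸ Set.mem_union_left _ hx) (Set.notMem_empty x)
    · exact h
  -- M ∩ σM = ∅
  have hMnu : M ≠ Set.univ := fun h => hF₀nu (Set.eq_univ_of_univ_subset (h ▸ hMsub))
  have hinter : M ∩ σ '' M = ∅ := by
    have g1 : φ '' (M ∩ σ '' M) = M ∩ σ '' M := by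
      rw [Set.image_inter φ.injective, hMi, hσMi]
    have g2 : σ '' (M ∩ σ '' M) = M ∩ σ '' M := by
      rw [Set.image_inter σ.injective, hσσ, Set.inter_comm]
    rcases hmin (M ∩ σ '' M) (hMc.inter hσMc) g1 g2 with h | h
    · exact h
    · exact absurd (Set.eq_univ_of_univ_subset (h ▸ Set.inter_subset_left)) hMnu
  -- σM = Mᶜ
  have hcompl : σ '' M = Mᶜ := by
    ext x
    constructor
    · intro hx hxM
      exact Set.notMem_empty x (hinter ▸ Set.mem_inter hxM hx)
    · intro hx
      rcases (hunion ▸ Set.mem_univ x : x ∈ M ∪ σ '' M) with h | h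
      · exact absurd h hx
      · exact h
  have hMopen : IsOpen M := by
    have : IsClosed Mᶜ := hcompl ▸ hσMc
    simpa using this.isOpen_compl
  -- minimality of σ '' M
  have hσMmin : ∀ C : Set Ω, C ⊆ σ '' M → IsClosed C → φ '' C = C → C.Nonempty → C = σ '' M := by
    intro C hCsub hCc hCi hCne
    have h1 : σ '' C ⊆ M := by
      have := Set.image_mono (f := σ) hCsub
      rwa [hσσ] at this
    have h2 : σ '' C = M := hMmin _ h1 (σ.isClosedMap _ hCc) (hconj C hCi) (hCne.image _)
    rw [← hσσ C, h2]
  refine ⟨M, ⟨⟨hMc, hMopen⟩, hMi, ?_, by rw [Set.inter_comm]; exact hinter, ?_⟩, ?_⟩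
  · intro C hCsub hCc hCi
    rcases C.eq_empty_or_nonempty with h | h
    · exact Or.inl h
    · exact Or.inr (hMmin C hCsub hCc hCi h)
  · rw [Set.union_comm]; exact hunion
  · rintro F' ⟨hF'clo, hF'i, hF'min, hF'int, hF'un⟩
    have hF'ne : F'.Nonempty := by
      rcases F'.eq_empty_or_nonempty with h | h
      · exfalso
        have hbad : (∅ : Set Ω) = Set.univ := by simpa [h] using hF'un
        obtain ⟨x, hx⟩ := hMne
        exact Set.notMem_empty x (hbad.symm ▸ Set.mem_univ x)
      · exact h
    rcases (F' ∩ M).eq_empty_or_nonempty with h | h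
    · -- F' ⊆ Mᶜ = σM
      right
      apply hσMmin F' ?_ hF'clo.1 hF'i hF'ne
      rw [hcompl]
      exact Set.subset_compl_iff_disjoint_right.2 (Set.disjoint_iff_inter_eq_empty.2 h)
    · left
      have hIc : IsClosed (F' ∩ M) := hF'clo.1.inter hMc
      have hIi : φ '' (F' ∩ M) = F' ∩ M := by
        rw [Set.image_inter φ.injective, hF'i, hMi]
      have h1 : F' ∩ M = M := hMmin _ Set.inter_subset_right hIc hIi h
      rcases hF'min (F' ∩ M) Set.inter_subset_left hIc hIi with h2 | h2
      · exact absurd h2 (Set.nonempty_iff_ne_empty.1 h)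
      · rw [← h2, h1]
end

section
/- Let φ be a minimal homeomorphism of the Cantor set Ω and σ a homeomorphism with σ² = id and σφσ = φ⁻¹. Let G_σ = {f ∈ C(Ω,ℤ) : f∘σ = f} and G_{φσ} = {g ∈ C(Ω,ℤ) : g∘(φσ) = g}. If (f,g) ∈ G_σ ⊕ G_{φσ} and f − g = h − h∘φ for some h ∈ C(Ω,ℤ), then there exists an integer z ∈ ℤ and k ∈ C(Ω,ℤ) such that f = k + k∘σ + z and g = k + k∘(φσ) + z. -/
/-- Let `φ` be a minimal homeomorphism of the Cantor set `Ω` and `σ` a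
homeomorphism with `σ² = id` and `σφσ = φ⁻¹`. If `f, g ∈ C(Ω,ℤ)` satisfy `f∘σ = f`,
`g∘(φσ) = g` and `f − g = h − h∘φ` for some `h ∈ C(Ω,ℤ)`, then there are `z ∈ ℤ` and
`k ∈ C(Ω,ℤ)` with `f = k + k∘σ + z` and `g = k + k∘(φσ) + z`. -/
theorem stmt7 {Ω : Type*} [TopologicalSpace Ω] [CompactSpace Ω] [T2Space Ω]
    [TotallyDisconnectedSpace Ω]
    (φ σ : Ω ≃ₜ Ω)
    (hminφ : ∀ F : Set Ω, IsClosed F → φ '' F = F → F = ∅ ∨ F = Set.univ)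
    (hσ2 : ∀ x, σ (σ x) = x) (hrel : ∀ x, σ (φ (σ x)) = φ.symm x)
    (f g h : C(Ω, ℤ))
    (hf : ∀ x, f (σ x) = f x) (hg : ∀ x, g (φ (σ x)) = g x)
    (hfg : ∀ x, f x - g x = h x - h (φ x)) :
    ∃ (z : ℤ) (k : C(Ω, ℤ)),
      (∀ x, f x = k x + k (σ x) + z) ∧ (∀ x, g x = k x + k (φ (σ x)) + z) := by
  by_cases hne : Nonempty Ω
  · obtain ⟨x₀⟩ := hne
    have hσφ : ∀ x, σ (φ.symm x) = φ (σ x) := by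
      intro x
      calc σ (φ.symm x) = σ (σ (φ (σ x))) := by rw [hrel]
        _ = φ (σ x) := hσ2 _
    have hkey : ∀ x, σ (φ.symm (σ x)) = φ x := by
      intro x; rw [hσφ, hσ2]
    have hτ2 : ∀ x, φ (σ (φ (σ x))) = x := by
      intro x; rw [hrel, Homeomorph.apply_symm_apply]
    set k : C(Ω, ℤ) := -((h.comp (σ : C(Ω, Ω))).comp (φ.symm : C(Ω, Ω))) with hk
    have hkval : ∀ x, k x = -h (σ (φ.symm x)) := fun x => rfl
    have hkσ : ∀ x, k (σ x) = -h (φ x) := by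
      intro x; rw [hkval, hkey]
    have hkτ : ∀ x, k (φ (σ x)) = -h x := by
      intro x; rw [hkval, Homeomorph.symm_apply_apply, hσ2]
    set U : C(Ω, ℤ) := f - k - k.comp (σ : C(Ω, Ω)) with hU
    have hUval : ∀ x, U x = f x - k x - k (σ x) := fun x => rfl
    have hUv : ∀ x, U x = g x - k x - k (φ (σ x)) := by
      intro x
      rw [hUval, hkσ, hkτ]
      have := hfg x; omega
    have hUσ : ∀ x, U (σ x) = U x := by
      intro x; rw [hUval, hUval, hf, hσ2]; ring
    have hUτ : ∀ x, U (φ (σ x)) = U x := by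
      intro x; rw [hUv, hUv, hg, hτ2]; ring
    have hUφ : ∀ x, U (φ x) = U x := by
      intro x
      have h1 := hUτ (σ x)
      rw [hσ2] at h1
      rw [h1, hUσ]
    set z := U x₀ with hz
    have hconst : ∀ x, U x = z := by
      have hF : IsClosed (U ⁻¹' {z}) := (isClosed_singleton).preimage U.continuous
      have himg : φ '' (U ⁻¹' {z}) = U ⁻¹' {z} := by
        ext y
        simp only [Set.mem_image, Set.mem_preimage, Set.mem_singleton_iff]
        constructor
        · rintro ⟨x, hx, rfl⟩; rw [hUφ]; exact hx
        · intro hy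
          refine ⟨φ.symm y, ?_, Homeomorph.apply_symm_apply _ _⟩
          have h2 := hUφ (φ.symm y)
          rw [Homeomorph.apply_symm_apply] at h2
          rw [← h2]; exact hy
      rcases hminφ _ hF himg with hemp | huniv
      · exfalso
        have hx0 : x₀ ∈ U ⁻¹' {z} := rfl
        rw [hemp] at hx0; exact hx0
      · intro x
        have hx : x ∈ U ⁻¹' {z} := huniv ▸ Set.mem_univ x
        exact hx
    refine ⟨z, k, fun x => ?_, fun x => ?_⟩
    · have := hconst x; rw [hUval] at this; omega
    · have := hconst x; rw [hUv] at this; omega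
  · exact ⟨0, 0, fun x => absurd ⟨x⟩ hne, fun x => absurd ⟨x⟩ hne⟩
end
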